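/- The harmonic map f: D* → ℝ³ defined in polar coordinates by f(r,t) = (r cos t, log r, -(1/r) sin t) has first fundamental form g = (1/r²)·g₀ where g₀(∂/∂t,∂/∂t) = cos²t + r⁴ sin²t; consequently every circle r = const has g₀-length at least 4, uniformly in r. -/

import Mathlib

/-! The velocity of the circle `t ↦ f r t` is `(-r sin t, 0, -(1/r) cos t)`, so
`r² ‖∂ₜf‖² = cos² t + r⁴ sin² t ≥ cos² t`. Hence the `g₀`-length of every circle is at least
`∫₀^{2π} |cos t| dt = 4`, whatever `r` is. -/

open Real intervalIntegral

theorem periodic_abs_cos : Function.Periodic (fun t => |cos t|) π := fun t => by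
  simp [cos_add_pi]

theorem integral_abs_cos_zero_two_pi : ∫ t in (0 : ℝ)..2 * π, |cos t| = 4 := by
  have hint : ∀ a b : ℝ, IntervalIntegrable (fun t => |cos t|) MeasureTheory.volume a b :=
    fun a b => (continuous_abs.comp continuous_cos).intervalIntegrable a b
  have half_period : ∫ t in (0 : ℝ)..0 + π, |cos t| = 2 := by
    rw [periodic_abs_cos.intervalIntegral_add_eq 0 (-(π / 2)),
      integral_congr (g := cos) fun t ht => abs_of_nonneg (cos_nonneg_of_mem_Icc ?_), integral_cos]
    · norm_num
    · rw [Set.uIcc_of_le (by linarith [pi_pos])] at ht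
      exact ⟨ht.1, by linarith [ht.2]⟩
  have two_periods := periodic_abs_cos.intervalIntegral_add_zsmul_eq 2 0 hint
  simp only [zero_add, zsmul_eq_mul, Int.cast_ofNat] at two_periods half_period
  rw [two_periods, half_period]
  norm_num

theorem four_le_integral_sqrt_cos_sq_add_mul_sin_sq {a : ℝ} (ha : 0 ≤ a) :
    4 ≤ ∫ t in (0 : ℝ)..2 * π, √(cos t ^ 2 + a * sin t ^ 2) := by
  rw [← integral_abs_cos_zero_two_pi]
  refine integral_mono_on (by linarith [pi_pos])
    ((continuous_abs.comp continuous_cos).intervalIntegrable _ _)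
    ((by fun_prop : Continuous fun t => √(cos t ^ 2 + a * sin t ^ 2)).intervalIntegrable _ _)
    fun t _ => abs_le_sqrt (le_add_of_nonneg_right (by positivity))

theorem hasDerivAt_euclidean_symm {n : ℕ} {g : ℝ → Fin n → ℝ} {g' : Fin n → ℝ} {t : ℝ}
    (h : HasDerivAt g g' t) :
    HasDerivAt (fun s => (WithLp.equiv 2 (Fin n → ℝ)).symm (g s))
      ((WithLp.equiv 2 (Fin n → ℝ)).symm g') t :=
  (PiLp.continuousLinearEquiv 2 ℝ (fun _ : Fin n => ℝ)).symm.hasFDerivAt.comp_hasDerivAt t h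

theorem hasDerivAt_horn_circle (r t : ℝ) :
    HasDerivAt (fun s => (WithLp.equiv 2 (Fin 3 → ℝ)).symm
        ![r * cos s, Real.log r, -(1 / r) * sin s])
      ((WithLp.equiv 2 (Fin 3 → ℝ)).symm ![-(r * sin t), 0, -(1 / r) * cos t]) t := by
  refine hasDerivAt_euclidean_symm (hasDerivAt_pi.2 fun i => ?_)
  fin_cases i
  · simpa using (hasDerivAt_cos t).const_mul r
  · simpa using hasDerivAt_const t (Real.log r)
  · simpa using (hasDerivAt_sin t).const_mul (-(1 / r))

theorem sq_mul_norm_sq_horn_velocity {r : ℝ} (hr : r ≠ 0) (t : ℝ) :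
    r ^ 2 * ‖(WithLp.equiv 2 (Fin 3 → ℝ)).symm ![-(r * sin t), 0, -(1 / r) * cos t]‖ ^ 2 =
      cos t ^ 2 + r ^ 4 * sin t ^ 2 := by
  rw [EuclideanSpace.real_norm_sq_eq]
  simp only [Fin.sum_univ_three, WithLp.equiv_symm_apply, PiLp.toLp_apply, Matrix.cons_val_zero,
    Matrix.cons_val_one, Matrix.cons_val_two, Matrix.head_cons, Matrix.tail_cons]
  field_simp
  ring

theorem harmonic_horn_metric (f : ℝ → ℝ → EuclideanSpace ℝ (Fin 3))
    (hf : ∀ r t, f r t = (WithLp.equiv 2 (Fin 3 → ℝ)).symm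
      ![r * cos t, Real.log r, -(1 / r) * sin t]) :
    ∀ r : ℝ, 0 < r → r < 1 →
      (∀ t : ℝ, r ^ 2 * ‖deriv (f r) t‖ ^ 2 = cos t ^ 2 + r ^ 4 * sin t ^ 2) ∧
        4 ≤ ∫ t in (0 : ℝ)..(2 * π), Real.sqrt (r ^ 2 * ‖deriv (f r) t‖ ^ 2) := by
  intro r hr _
  have metric (t : ℝ) : r ^ 2 * ‖deriv (f r) t‖ ^ 2 = cos t ^ 2 + r ^ 4 * sin t ^ 2 := by
    rw [funext (hf r), (hasDerivAt_horn_circle r t).deriv, sq_mul_norm_sq_horn_velocity hr.ne']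
  refine ⟨metric, ?_⟩
  simp only [metric]
  exact four_le_integral_sqrt_cos_sq_add_mul_sin_sq (by positivity)
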